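/- Let ε ∈ {0, 1} and let v₀, w_{m₀}, L₀, h₀ be real numbers with v₀ > 0, w_{m₀} > 0, L₀ > 0, h₀ > 0 and v₀ > ε·w_{m₀}. Then there exists a unique γ > 0 such that (2·v₀·h₀ − L₀·γ)·exp(−γ²) = (w_{m₀} + L₀·γ²)·(√π·erf(γ) + 2·h₀·ε). -/

import Mathlib

open Real MeasureTheory Set

noncomputable section

/-- The error function `erf x = (2/√π) ∫₀ˣ exp(−u²) du`. -/
def erf (x : ℝ) : ℝ := (2 / Real.sqrt π) * ∫ u in (0:ℝ)..x, Real.exp (-u ^ 2)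

/-- Partial derivative in the first (space) variable. -/
def pz (f : ℝ → ℝ → ℝ) (z t : ℝ) : ℝ := deriv (fun z' => f z' t) z

/-- Partial derivative in the second (time) variable. -/
def pt (f : ℝ → ℝ → ℝ) (z t : ℝ) : ℝ := deriv (fun t' => f z t') t

/-- Second partial derivative in the first (space) variable. -/
def pzz (f : ℝ → ℝ → ℝ) (z t : ℝ) : ℝ := deriv (fun z' => pz f z' t) z

/-! The residual `F = LHS − RHS` has derivative
`−exp(−γ²) (L₀ + 4 v₀ h₀ γ + 2 wm₀) − 2 L₀ γ (√π erf γ + 2 h₀ ε) < 0` for `γ > 0`, so it is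
strictly decreasing on `[0, ∞)`. It is positive at `0` (this is where `ε wm₀ < v₀` enters) and
negative at `γ = 2 v₀ h₀ / L₀`, where the left-hand side vanishes; the intermediate value theorem
gives the root and strict monotonicity its uniqueness. -/

lemma erf_zero : erf 0 = 0 := by simp [erf]

lemma hasDerivAt_erf (x : ℝ) : HasDerivAt erf (2 / Real.sqrt π * Real.exp (-x ^ 2)) x :=
  ((by fun_prop : Continuous fun u : ℝ => Real.exp (-u ^ 2)).integral_hasStrictDerivAt 0 x
    |>.hasDerivAt).const_mul _

lemma sqrt_pi_mul_hasDerivAt_erf (x : ℝ) :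
    HasDerivAt (fun x => Real.sqrt π * erf x) (2 * Real.exp (-x ^ 2)) x :=
  ((hasDerivAt_erf x).const_mul (Real.sqrt π)).congr_deriv <| by
    rw [← mul_assoc, mul_div_cancel₀ _ (Real.sqrt_pos.mpr Real.pi_pos).ne']

lemma erf_pos {x : ℝ} (hx : 0 < x) : 0 < erf x :=
  mul_pos (div_pos two_pos (Real.sqrt_pos.mpr Real.pi_pos)) <|
    intervalIntegral.intervalIntegral_pos_of_pos
      ((by fun_prop : Continuous fun u : ℝ => Real.exp (-u ^ 2)).intervalIntegrable 0 x)
      (fun _ => Real.exp_pos _) hx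

lemma existsUnique_zero_of_strictAntiOn {f : ℝ → ℝ} {a b : ℝ} (hab : a ≤ b)
    (hf : ContinuousOn f (Icc a b)) (hanti : StrictAntiOn f (Ici a))
    (ha : 0 < f a) (hb : f b < 0) : ∃! x, a < x ∧ f x = 0 := by
  obtain ⟨x, hx, hfx⟩ := intermediate_value_Ioo' hab hf ⟨hb, ha⟩
  refine ⟨x, ⟨hx.1, hfx⟩, fun y ⟨hy, hfy⟩ => ?_⟩
  exact hanti.injOn (le_of_lt hy) (le_of_lt hx.1) (hfy.trans hfx.symm)

def similarityResidual (ε v₀ wm₀ L₀ h₀ γ : ℝ) : ℝ :=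
  (2 * v₀ * h₀ - L₀ * γ) * Real.exp (-γ ^ 2) -
    (wm₀ + L₀ * γ ^ 2) * (Real.sqrt π * erf γ + 2 * h₀ * ε)

section similarityResidual

variable (ε v₀ wm₀ L₀ h₀ : ℝ)

lemma hasDerivAt_similarityResidual (x : ℝ) :
    HasDerivAt (similarityResidual ε v₀ wm₀ L₀ h₀)
      (-Real.exp (-x ^ 2) * (L₀ + 4 * v₀ * h₀ * x + 2 * wm₀) -
        2 * L₀ * x * (Real.sqrt π * erf x + 2 * h₀ * ε)) x := by
  have hexp : HasDerivAt (fun x : ℝ => Real.exp (-x ^ 2)) (Real.exp (-x ^ 2) * -(2 * x)) x := by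
    simpa using ((hasDerivAt_pow 2 x).neg).exp
  have hlin : HasDerivAt (fun x : ℝ => 2 * v₀ * h₀ - L₀ * x) (-L₀) x := by
    simpa using ((hasDerivAt_id x).const_mul L₀).const_sub (2 * v₀ * h₀)
  have hquad : HasDerivAt (fun x : ℝ => wm₀ + L₀ * x ^ 2) (L₀ * (2 * x)) x := by
    simpa using ((hasDerivAt_pow 2 x).const_mul L₀).const_add wm₀
  exact ((hlin.fun_mul hexp).fun_sub
    (hquad.fun_mul ((sqrt_pi_mul_hasDerivAt_erf x).add_const (2 * h₀ * ε)))).congr_deriv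
    (by ring)

lemma continuous_similarityResidual : Continuous (similarityResidual ε v₀ wm₀ L₀ h₀) :=
  continuous_iff_continuousAt.mpr fun x =>
    (hasDerivAt_similarityResidual ε v₀ wm₀ L₀ h₀ x).continuousAt

variable {ε v₀ wm₀ L₀ h₀}

lemma strictAntiOn_similarityResidual (hε : 0 ≤ ε) (hv : 0 ≤ v₀) (hw : 0 ≤ wm₀) (hL : 0 < L₀)
    (hh : 0 ≤ h₀) : StrictAntiOn (similarityResidual ε v₀ wm₀ L₀ h₀) (Ici 0) := by
  refine strictAntiOn_of_deriv_neg (convex_Ici 0)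
    (continuous_similarityResidual ε v₀ wm₀ L₀ h₀).continuousOn fun x hx => ?_
  rw [interior_Ici, mem_Ioi] at hx
  rw [(hasDerivAt_similarityResidual ε v₀ wm₀ L₀ h₀ x).deriv]
  have hdecay : 0 < Real.exp (-x ^ 2) * (L₀ + 4 * v₀ * h₀ * x + 2 * wm₀) :=
    mul_pos (Real.exp_pos _) (by positivity)
  have hgrowth : 0 ≤ 2 * L₀ * x * (Real.sqrt π * erf x + 2 * h₀ * ε) :=
    mul_nonneg (by positivity) (add_nonneg (mul_nonneg (Real.sqrt_nonneg _) (erf_pos hx).le)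
      (by positivity))
  linarith

lemma similarityResidual_zero_pos (hh : 0 < h₀) (h : ε * wm₀ < v₀) :
    0 < similarityResidual ε v₀ wm₀ L₀ h₀ 0 := by
  norm_num [similarityResidual, erf_zero]
  nlinarith

lemma similarityResidual_neg (hε : 0 ≤ ε) (hv : 0 < v₀) (hw : 0 ≤ wm₀) (hL : 0 < L₀)
    (hh : 0 < h₀) : similarityResidual ε v₀ wm₀ L₀ h₀ (2 * v₀ * h₀ / L₀) < 0 := by
  have hγ : 0 < 2 * v₀ * h₀ / L₀ := by positivity
  have herf := mul_pos (Real.sqrt_pos.mpr Real.pi_pos) (erf_pos hγ)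
  rw [similarityResidual, mul_div_cancel₀ _ hL.ne', sub_self, zero_mul, zero_sub, neg_neg_iff_pos]
  positivity

end similarityResidual

/-- unique positive root of the transcendental equation for the
Robin/Neumann similarity solution. -/
theorem statement11 (ε v₀ wm₀ L₀ h₀ : ℝ) (hε : ε = 0 ∨ ε = 1)
    (h1 : 0 < v₀) (h2 : 0 < wm₀) (h3 : 0 < L₀) (h4 : 0 < h₀)
    (h5 : ε * wm₀ < v₀) :
    ∃! γ : ℝ, 0 < γ ∧
      (2 * v₀ * h₀ - L₀ * γ) * Real.exp (-γ ^ 2) =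
        (wm₀ + L₀ * γ ^ 2) * (Real.sqrt π * erf γ + 2 * h₀ * ε) := by
  have hε0 : 0 ≤ ε := by rcases hε with rfl | rfl <;> norm_num
  simpa only [similarityResidual, sub_eq_zero] using
    existsUnique_zero_of_strictAntiOn (by positivity)
      (continuous_similarityResidual ε v₀ wm₀ L₀ h₀).continuousOn
      (strictAntiOn_similarityResidual hε0 h1.le h2.le h3 h4.le)
      (similarityResidual_zero_pos h4 h5) (similarityResidual_neg hε0 h1 h2.le h3 h4)

end
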